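/- There is no set A ⊆ Z_m with 1 ≤ R_A(n) ≤ 5 for all n ∈ Z_m when m > 500; equivalently, Ruzsa's number R_m ≥ 6 for all m > 500. -/

import Mathlib

/-!
For `A` in a finite abelian group `G`, let `k = |A|`, `M = |G|` and `E = ∑ R_A(n)²`, the
additive energy of `A`. Since `∑ R_A(n) = k²`, the upper bound `R_A ≤ 5` gives `k² ≤ 5M`.
The pairs `(a, a')` and `(a', a)` cancel in `R_A(n)` modulo 2, so `R_A(n)` is even, hence
`2` or `4`, unless `n = 2a` for some `a ∈ A`; thus `∑ (R_A(n) - 3)² ≤ M + 3k`, that is,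
`E ≤ 6k² + 3k - 8M`. On the other hand `E` also counts the solutions of `a - b = c - d`, and
Cauchy–Schwarz over the `M - 1` nonzero differences gives the Lev–Sárközy bound
`(k² - k)² ≤ (M - 1)(E - k²)`. For `M > 500` the two bounds are incompatible.
-/

def repFn {m : ℕ} (A : Finset (ZMod m)) (n : ZMod m) : ℕ :=
  ((A ×ˢ A).filter (fun p => p.1 + p.2 = n)).card

open Finset
open scoped Pointwise Combinatorics.Additive

def addRepr {α : Type*} [Add α] [DecidableEq α] (s : Finset α) (n : α) : ℕ :=
  #{xy ∈ s ×ˢ s | xy.1 + xy.2 = n}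

lemma even_addRepr_of_notMem_image {α : Type*} [AddCommMagma α] [DecidableEq α]
    {s : Finset α} {n : α} (hn : n ∉ s.image fun a => a + a) : Even (addRepr s n) := by
  rw [addRepr, ← ZMod.natCast_eq_zero_iff_even, card_eq_sum_ones, Nat.cast_sum, Nat.cast_one]
  refine sum_involution (fun xy _ => xy.swap) (fun _ _ => by decide) (fun xy hxy _ hswap => ?_)
    (fun xy hxy => ?_) (fun _ _ => rfl)
  · simp only [mem_filter, mem_product] at hxy
    have hdiag : xy.2 = xy.1 := congrArg Prod.fst hswap
    exact hn (mem_image.2 ⟨xy.1, hxy.1.1, by rw [← hxy.2, hdiag]⟩)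
  · simp only [mem_filter, mem_product, Prod.fst_swap, Prod.snd_swap] at hxy ⊢
    exact ⟨hxy.1.symm, add_comm xy.2 xy.1 ▸ hxy.2⟩

lemma sq_sub_three_le_of_mem_Icc {r : ℕ} (hr : r ∈ Set.Icc 1 5) : ((r : ℤ) - 3) ^ 2 ≤ 4 := by
  obtain ⟨h1, h5⟩ := hr
  interval_cases r <;> norm_num

lemma sq_sub_three_le_of_even {r : ℕ} (hr : r ∈ Set.Icc 1 5) (heven : Even r) :
    ((r : ℤ) - 3) ^ 2 ≤ 1 := by
  obtain ⟨h1, h5⟩ := hr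
  obtain ⟨k, rfl⟩ := heven
  obtain rfl | rfl : k = 1 ∨ k = 2 := by omega
  all_goals norm_num

lemma sub_one_mul_lt_sq_of_sq_le_five_mul {M K : ℤ} (hM : 500 < M) (hK : 0 ≤ K)
    (hKM : K ^ 2 ≤ 5 * M) : (M - 1) * (5 * K ^ 2 + 3 * K - 8 * M) < (K ^ 2 - K) ^ 2 := by
  nlinarith [sq_nonneg (2 * K ^ 2 - 5 * M), sq_nonneg (K - 60), mul_nonneg hK (sub_nonneg.2 hKM)]

section AddCommGroup

variable {G : Type*} [AddCommGroup G] [DecidableEq G]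

lemma addEnergy_neg_right (s t : Finset G) : E[s, -t] = E[s, t] := by
  refine card_nbij' (fun x => (x.1, -x.2.2, -x.2.1)) (fun x => (x.1, -x.2.2, -x.2.1)) ?_ ?_
    (fun _ _ => by simp) (fun _ _ => by simp)
  all_goals
    rintro ⟨⟨a₁, a₂⟩, b₁, b₂⟩
    simp only [coe_filter, mem_product, mem_neg', neg_neg, Set.mem_ofPred_eq]
    rintro ⟨⟨has, hb₁, hb₂⟩, h⟩
    exact ⟨⟨has, hb₂, hb₁⟩, by rwa [← sub_eq_add_neg, ← sub_eq_add_neg, sub_eq_sub_iff_add_eq_add]⟩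

lemma card_filter_sub_eq_zero (s : Finset G) : #{xy ∈ s ×ˢ s | xy.1 - xy.2 = 0} = #s := by
  simp_rw [sub_eq_zero, ← diag_eq_filter, diag_card]

variable [Fintype G]

lemma addEnergy_eq_sum_sq_card_sub (s t : Finset G) :
    E[s, t] = ∑ d, #{xy ∈ s ×ˢ t | xy.1 - xy.2 = d} ^ 2 := by
  rw [← addEnergy_neg_right, addEnergy_eq_sum_sq]
  refine sum_congr rfl fun d _ => congrArg (· ^ 2) ?_
  refine card_nbij' (fun x => (x.1, -x.2)) (fun x => (x.1, -x.2)) ?_ ?_ ?_ ?_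
  all_goals intro x; simp [sub_eq_add_neg]

lemma sum_card_filter_sub_eq (s : Finset G) :
    ∑ d, #{xy ∈ s ×ˢ s | xy.1 - xy.2 = d} = #s ^ 2 := by
  rw [← card_eq_sum_card_fiberwise fun _ _ => mem_univ _, card_product, sq]

lemma sq_card_sq_sub_card_le_mul_addEnergy_sub (s : Finset G) :
    ((#s : ℤ) ^ 2 - #s) ^ 2 ≤ (Fintype.card G - 1) * (E[s] - #s ^ 2) := by
  set D : G → ℤ := fun d => #{xy ∈ s ×ˢ s | xy.1 - xy.2 = d}
  have hD₀ : D 0 = #s := congrArg Nat.cast (card_filter_sub_eq_zero s)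
  have hsum : ∑ d ∈ univ.erase 0, D d = (#s : ℤ) ^ 2 - #s := by
    rw [sum_erase_eq_sub (mem_univ _), hD₀, ← Nat.cast_sum, sum_card_filter_sub_eq, Nat.cast_pow]
  have hsum_sq : ∑ d ∈ univ.erase 0, D d ^ 2 = (E[s] : ℤ) - #s ^ 2 := by
    rw [sum_erase_eq_sub (mem_univ _), hD₀, addEnergy_eq_sum_sq_card_sub, Nat.cast_sum]
    simp only [D, Nat.cast_pow]
  have hcard : (#(univ.erase (0 : G)) : ℤ) = Fintype.card G - 1 := by
    rw [card_erase_of_mem (mem_univ _), card_univ, Nat.cast_pred Fintype.card_pos]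
  rw [← hsum, ← hsum_sq, ← hcard]
  exact sq_sum_le_card_mul_sum_sq

lemma sum_addRepr (s : Finset G) : ∑ n, addRepr s n = #s ^ 2 := by
  unfold addRepr
  rw [← card_eq_sum_card_fiberwise fun _ _ => mem_univ _, card_product, sq]

lemma sum_sq_addRepr_sub_three (s : Finset G) :
    ∑ n, ((addRepr s n : ℤ) - 3) ^ 2 = (E[s] : ℤ) - 6 * #s ^ 2 + 9 * Fintype.card G := by
  have hsum : ∑ n, (addRepr s n : ℤ) = #s ^ 2 := by exact_mod_cast sum_addRepr s
  have hsum_sq : ∑ n, (addRepr s n : ℤ) ^ 2 = E[s] := by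
    exact_mod_cast (addEnergy_eq_sum_sq s s).symm
  simp_rw [sub_sq, sum_add_distrib, sum_sub_distrib, ← sum_mul, ← mul_sum, hsum, hsum_sq,
    sum_const, card_univ, nsmul_eq_mul]
  ring

lemma sum_sq_addRepr_sub_three_le {s : Finset G} (hs : ∀ n, addRepr s n ∈ Set.Icc 1 5) :
    ∑ n, ((addRepr s n : ℤ) - 3) ^ 2 ≤ (Fintype.card G : ℤ) + 3 * #s := by
  set T := s.image fun a => a + a
  calc ∑ n, ((addRepr s n : ℤ) - 3) ^ 2
      = ∑ n ∈ Tᶜ, ((addRepr s n : ℤ) - 3) ^ 2 + ∑ n ∈ T, ((addRepr s n : ℤ) - 3) ^ 2 :=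
        (sum_compl_add_sum T _).symm
    _ ≤ ∑ n ∈ Tᶜ, 1 + ∑ n ∈ T, 4 := by
        gcongr with n hn n
        · exact sq_sub_three_le_of_even (hs n) (even_addRepr_of_notMem_image (mem_compl.1 hn))
        · exact sq_sub_three_le_of_mem_Icc (hs n)
    _ = Fintype.card G + 3 * #T := by
        rw [sum_const, sum_const, card_compl, nsmul_eq_mul, nsmul_eq_mul,
          Nat.cast_sub (card_le_univ T)]
        ring
    _ ≤ Fintype.card G + 3 * #s := by grw [card_image_le]

theorem not_forall_addRepr_mem_Icc_one_five (hG : 500 < Fintype.card G) (s : Finset G) :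
    ¬ ∀ n, addRepr s n ∈ Set.Icc 1 5 := by
  intro hs
  have hcard : #s ^ 2 ≤ Fintype.card G * 5 :=
    sum_addRepr s ▸ sum_le_card_nsmul univ _ 5 fun n _ => (hs n).2
  have hE : (E[s] : ℤ) - #s ^ 2 ≤ 5 * #s ^ 2 + 3 * #s - 8 * Fintype.card G := by
    linarith [sum_sq_addRepr_sub_three s, sum_sq_addRepr_sub_three_le hs]
  have hG' : (500 : ℤ) < Fintype.card G := by exact_mod_cast hG
  have hlt := sub_one_mul_lt_sq_of_sq_le_five_mul hG' (Nat.cast_nonneg #s)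
    (by rw [mul_comm]; exact_mod_cast hcard)
  have hle := (sq_card_sq_sub_card_le_mul_addEnergy_sub s).trans
    (mul_le_mul_of_nonneg_left hE (by linarith))
  exact hle.not_gt hlt

end AddCommGroup

theorem stmt14 (m : ℕ) (hm : 500 < m) :
    ¬ ∃ A : Finset (ZMod m), ∀ n : ZMod m, 1 ≤ repFn A n ∧ repFn A n ≤ 5 := by
  rintro ⟨A, hA⟩
  have : NeZero m := ⟨by omega⟩
  exact not_forall_addRepr_mem_Icc_one_five (by rwa [ZMod.card]) A hA
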